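/- Let all preferences in P be substitutable and satisfy the law of aggregate demand, let μ and μ̃ be stable matchings with μ ≻_F μ̃, and let σ be a cycle for the reduced preference profile P^{μ,μ̃}. Then the cyclic matching μ_σ under P^{μ,μ̃} is individually rational under P^{μ,μ̃}, i.e. C^{μ,μ̃}_a(μ_σ(a)) = μ_σ(a) for every agent a. -/
import Mathlib


open Finset

noncomputable section

open scoped Classical

/-- `C` is a choice function: `C S ⊆ S` for every `S`. -/
def IsChoiceFun {α : Type*} (C : Finset α → Finset α) : Prop := ∀ S, C S ⊆ S

/-- Substitutability of a choice function: if `b` is chosen from `S`, then `b` is chosen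
from `S' ∪ {b}` for every `S' ⊆ S`. -/
def Substitutable {α : Type*} [DecidableEq α] (C : Finset α → Finset α) : Prop :=
  ∀ (S S' : Finset α) (b : α), S' ⊆ S → b ∈ C S → b ∈ C (insert b S')

/-- The law of aggregate demand for a choice function. -/
def LAD {α : Type*} (C : Finset α → Finset α) : Prop :=
  ∀ S' S : Finset α, S' ⊆ S → (C S').card ≤ (C S).card

/-- The most `u`-preferred subset of `S` among the members of the family `A` of acceptable
sets (the empty set is always available as a fallback). -/
def bestIn {α : Type*} (u : Finset α → ℕ) (A : Set (Finset α)) (S : Finset α) : Finset α := by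
  classical
  have h : ∃ T ∈ (S.powerset).filter (fun T => T ∈ A ∨ T = ∅),
      ∀ T' ∈ (S.powerset).filter (fun T => T ∈ A ∨ T = ∅), u T' ≤ u T :=
    Finset.exists_max_image _ u ⟨∅, by simp⟩
  exact h.choose

/-- A many-to-many matching market: each firm `f` has a strict preference over subsets
of workers, represented by an injective utility `uF f`, and symmetrically for workers. -/
structure Market (F W : Type*) where
  uF : F → Finset W → ℕ
  uW : W → Finset F → ℕ
  injF : ∀ f, Function.Injective (uF f)
  injW : ∀ w, Function.Injective (uW w)

/-- A many-to-many matching. -/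
structure Matching (F W : Type*) where
  fm : F → Finset W
  wm : W → Finset F
  consistent : ∀ f w, w ∈ fm f ↔ f ∈ wm w

namespace Market

variable {F W : Type*} [DecidableEq F] [DecidableEq W]

/-- The choice set of firm `f` under the original preference: the most preferred
subset among the acceptable subsets (those strictly preferred to `∅`). -/
def Cf (M : Market F W) (f : F) : Finset W → Finset W :=
  bestIn (M.uF f) {T | M.uF f ∅ < M.uF f T}

/-- The choice set of worker `w` under the original preference. -/
def Cw (M : Market F W) (w : W) : Finset F → Finset F :=
  bestIn (M.uW w) {T | M.uW w ∅ < M.uW w T}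

/-- Individual rationality under the original profile. -/
def IR (M : Market F W) (μ : Matching F W) : Prop :=
  (∀ f, M.Cf f (μ.fm f) = μ.fm f) ∧ (∀ w, M.Cw w (μ.wm w) = μ.wm w)

/-- `(f,w)` blocks `μ` under the original profile. -/
def Blocks (M : Market F W) (μ : Matching F W) (f : F) (w : W) : Prop :=
  w ∉ μ.fm f ∧ w ∈ M.Cf f (insert w (μ.fm f)) ∧ f ∈ M.Cw w (insert f (μ.wm w))

/-- Stability under the original profile. -/
def Stable (M : Market F W) (μ : Matching F W) : Prop :=
  M.IR μ ∧ ∀ f w, ¬ M.Blocks μ f w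

/-- Blair's partial order for firm `f`: `S ⪰_f S'` iff `C_f (S ∪ S') = S`. -/
def blairF (M : Market F W) (f : F) (S S' : Finset W) : Prop := M.Cf f (S ∪ S') = S

/-- Blair's partial order for worker `w`. -/
def blairW (M : Market F W) (w : W) (S S' : Finset F) : Prop := M.Cw w (S ∪ S') = S

/-- The unanimous Blair order for the firms' side: `μ ⪰_F μ'`. -/
def geF (M : Market F W) (μ μ' : Matching F W) : Prop := ∀ f, M.blairF f (μ.fm f) (μ'.fm f)

/-- The unanimous Blair order for the workers' side: `μ ⪰_W μ'`. -/
def geW (M : Market F W) (μ μ' : Matching F W) : Prop := ∀ w, M.blairW w (μ.wm w) (μ'.wm w)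

/-- Strict unanimous Blair order for the firms' side: `μ ≻_F μ'`. -/
def gtF (M : Market F W) (μ μ' : Matching F W) : Prop := M.geF μ μ' ∧ μ ≠ μ'

/-- Workers deleted from `f`'s list in Step 1(a) of the reduction procedure:
those belonging to some `W' ≻_f μ(f)` but not to `μ(f)`. -/
def D1 (M : Market F W) (μ : Matching F W) (f : F) : Set W :=
  {x | ∃ W' : Finset W, (M.Cf f (W' ∪ μ.fm f) = W' ∧ W' ≠ μ.fm f) ∧ x ∈ W' ∧ x ∉ μ.fm f}

/-- Workers deleted from `f`'s list in Step 2(a): those belonging to some `W'` with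
`μ̃(f) ≻_f W'` but not to `μ̃(f)`. -/
def D2 (M : Market F W) (μt : Matching F W) (f : F) : Set W :=
  {x | ∃ W' : Finset W, (M.Cf f (μt.fm f ∪ W') = μt.fm f ∧ μt.fm f ≠ W') ∧ x ∈ W' ∧ x ∉ μt.fm f}

/-- Firms deleted from `w`'s list in Step 1(b). -/
def E1 (M : Market F W) (μt : Matching F W) (w : W) : Set F :=
  {x | ∃ F' : Finset F, (M.Cw w (F' ∪ μt.wm w) = F' ∧ F' ≠ μt.wm w) ∧ x ∈ F' ∧ x ∉ μt.wm w}

/-- Firms deleted from `w`'s list in Step 2(b). -/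
def E2 (M : Market F W) (μ : Matching F W) (w : W) : Set F :=
  {x | ∃ F' : Finset F, (M.Cw w (μ.wm w ∪ F') = μ.wm w ∧ μ.wm w ≠ F') ∧ x ∈ F' ∧ x ∉ μ.wm w}

/-- Workers deleted from `f`'s list in Step 3: those workers `w` for which `{f}` is no
longer on `w`'s list after Steps 1 and 2 (either `{f}` was never acceptable to `w`, or
`f` was deleted from `w`'s list in Step 1(b) or 2(b)). -/
def D3 (M : Market F W) (μ μt : Matching F W) (f : F) : Set W :=
  {w | ¬ (M.uW w ∅ < M.uW w {f}) ∨ f ∈ M.E1 μt w ∪ M.E2 μ w}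

/-- Firms deleted from `w`'s list in Step 3. -/
def E3 (M : Market F W) (μ μt : Matching F W) (w : W) : Set F :=
  {f | ¬ (M.uF f ∅ < M.uF f {w}) ∨ w ∈ M.D1 μ f ∪ M.D2 μt f}

/-- All workers deleted from `f`'s list in the reduction procedure. -/
def Dall (M : Market F W) (μ μt : Matching F W) (f : F) : Set W :=
  M.D1 μ f ∪ M.D2 μt f ∪ M.D3 μ μt f

/-- All firms deleted from `w`'s list in the reduction procedure. -/
def Eall (M : Market F W) (μ μt : Matching F W) (w : W) : Set F :=
  M.E1 μt w ∪ M.E2 μ w ∪ M.E3 μ μt w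

/-- The family of sets surviving in `f`'s list under the reduced profile `P^{μ,μ̃}`:
originally acceptable sets containing no deleted worker. -/
def RAf (M : Market F W) (μ μt : Matching F W) (f : F) : Set (Finset W) :=
  {T | M.uF f ∅ < M.uF f T ∧ ∀ x ∈ T, x ∉ M.Dall μ μt f}

/-- The family of sets surviving in `w`'s list under the reduced profile `P^{μ,μ̃}`. -/
def RAw (M : Market F W) (μ μt : Matching F W) (w : W) : Set (Finset F) :=
  {T | M.uW w ∅ < M.uW w T ∧ ∀ x ∈ T, x ∉ M.Eall μ μt w}

/-- The choice set `C^{μ,μ̃}_f` of firm `f` under the reduced profile. -/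
def Cfred (M : Market F W) (μ μt : Matching F W) (f : F) : Finset W → Finset W :=
  bestIn (M.uF f) (M.RAf μ μt f)

/-- The choice set `C^{μ,μ̃}_w` of worker `w` under the reduced profile. -/
def Cwred (M : Market F W) (μ μt : Matching F W) (w : W) : Finset F → Finset F :=
  bestIn (M.uW w) (M.RAw μ μt w)

/-- Individual rationality under the reduced profile `P^{μ,μ̃}`. -/
def IRred (M : Market F W) (μ μt ν : Matching F W) : Prop :=
  (∀ f, M.Cfred μ μt f (ν.fm f) = ν.fm f) ∧ (∀ w, M.Cwred μ μt w (ν.wm w) = ν.wm w)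

/-- Blocking under the reduced profile `P^{μ,μ̃}`. -/
def Blocksred (M : Market F W) (μ μt ν : Matching F W) (f : F) (w : W) : Prop :=
  w ∉ ν.fm f ∧ w ∈ M.Cfred μ μt f (insert w (ν.fm f)) ∧
    f ∈ M.Cwred μ μt w (insert f (ν.wm w))

/-- Stability under the reduced profile `P^{μ,μ̃}`. -/
def Stablered (M : Market F W) (μ μt ν : Matching F W) : Prop :=
  M.IRred μ μt ν ∧ ∀ f w, ¬ M.Blocksred μ μt ν f w

/-- The unanimous Blair order on the firms' side computed with the reduced choice sets. -/
def geFred (M : Market F W) (μ μt ν ν' : Matching F W) : Prop :=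
  ∀ f, M.Cfred μ μt f (ν.fm f ∪ ν'.fm f) = ν.fm f

/-- The unanimous Blair order on the workers' side computed with the reduced choice sets. -/
def geWred (M : Market F W) (μ μt ν ν' : Matching F W) : Prop :=
  ∀ w, M.Cwred μ μt w (ν.wm w ∪ ν'.wm w) = ν.wm w

/-- All preferences in the market are substitutable. -/
def SubstAll (M : Market F W) : Prop :=
  (∀ f, Substitutable (M.Cf f)) ∧ (∀ w, Substitutable (M.Cw w))

/-- All preferences in the market satisfy the law of aggregate demand. -/
def LADAll (M : Market F W) : Prop :=
  (∀ f, LAD (M.Cf f)) ∧ (∀ w, LAD (M.Cw w))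

/-- A cycle for the reduced profile `P^{μ,μ̃}`: an `r`-periodic sequence of worker-firm
pairs `(w_i, f_i)` (indexed cyclically) such that (i) `w_i ∈ μ(f_i) \ μ̃(f_i)`;
(ii) `C^{μ,μ̃}_{f_i}(W \ {w_i}) = (μ(f_i) \ {w_i}) ∪ {w_{i+1}}`; and (iii)
`C^{μ,μ̃}_{w_{i+1}}(μ(w_{i+1}) ∪ {f_i}) = (μ(w_{i+1}) \ {f_{i+1}}) ∪ {f_i}`. -/
def IsCycle [Fintype W] (M : Market F W) (μ μt : Matching F W) (r : ℕ)
    (w : ℕ → W) (f : ℕ → F) : Prop :=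
  0 < r ∧ (∀ i, w (i + r) = w i) ∧ (∀ i, f (i + r) = f i) ∧
  ∀ i, (w i ∈ μ.fm (f i) ∧ w i ∉ μt.fm (f i)) ∧
    M.Cfred μ μt (f i) (Finset.univ \ {w i}) = insert (w (i + 1)) (μ.fm (f i) \ {w i}) ∧
    M.Cwred μ μt (w (i + 1)) (μ.wm (w (i + 1)) ∪ {f i}) =
      insert (f i) (μ.wm (w (i + 1)) \ {f (i + 1)})

/-- The firm-side assignment of the cyclic matching `μ_σ` obtained from the cycle
`σ = (w, f)` of length `r`. -/
def cyclicFm (μ : Matching F W) (r : ℕ) (w : ℕ → W) (f : ℕ → F) (g : F) : Finset W :=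
  if ∃ i ∈ Finset.range r, f i = g then
    (μ.fm g \ ((Finset.range r).filter (fun i => f i = g)).image w) ∪
      ((Finset.range r).filter (fun i => f i = g)).image (fun i => w (i + 1))
  else μ.fm g

/-- `ν` is a cyclic matching under the reduced profile `P^{μ,μ̃}`: `ν = μ_σ` for some
cycle `σ` for `P^{μ,μ̃}` (the worker side of `ν` is determined by consistency). -/
def IsCyclicMatching [Fintype W] (M : Market F W) (μ μt ν : Matching F W) : Prop :=
  ∃ (r : ℕ) (w : ℕ → W) (f : ℕ → F),
    M.IsCycle μ μt r w f ∧ ∀ g, ν.fm g = cyclicFm μ r w f g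

end Market


/- ===================== Auxiliary development ===================== -/

section BestInLemmas

variable {α : Type*}

theorem bestIn_spec (u : Finset α → ℕ) (A : Set (Finset α)) (S : Finset α) :
    bestIn u A S ∈ (S.powerset).filter (fun T => T ∈ A ∨ T = ∅) ∧
    ∀ T' ∈ (S.powerset).filter (fun T => T ∈ A ∨ T = ∅), u T' ≤ u (bestIn u A S) := by
  unfold bestIn
  exact (Finset.exists_max_image _ u ⟨∅, by simp⟩).choose_spec

theorem bestIn_subset (u : Finset α → ℕ) (A : Set (Finset α)) (S : Finset α) :
    bestIn u A S ⊆ S := by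
  have := (bestIn_spec u A S).1
  simp only [mem_filter, mem_powerset] at this
  exact this.1

theorem bestIn_acc (u : Finset α → ℕ) (A : Set (Finset α)) (S : Finset α) :
    bestIn u A S ∈ A ∨ bestIn u A S = ∅ := by
  have := (bestIn_spec u A S).1
  simp only [mem_filter, mem_powerset] at this
  exact this.2

theorem bestIn_le (u : Finset α → ℕ) (A : Set (Finset α)) {S T : Finset α}
    (hT : T ⊆ S) (hTA : T ∈ A ∨ T = ∅) : u T ≤ u (bestIn u A S) :=
  (bestIn_spec u A S).2 T (by simp only [mem_filter, mem_powerset]; exact ⟨hT, hTA⟩)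

theorem bestIn_eq_of (u : Finset α → ℕ) (A : Set (Finset α)) {S : Finset α}
    (hinj : Function.Injective u) {x : Finset α} (hx : x ⊆ S) (hxA : x ∈ A ∨ x = ∅)
    (hmax : ∀ T ⊆ S, (T ∈ A ∨ T = ∅) → u T ≤ u x) : bestIn u A S = x := by
  apply hinj
  exact Nat.le_antisymm (hmax _ (bestIn_subset u A S) (bestIn_acc u A S))
    (bestIn_le u A hx hxA)

theorem bestIn_irc (u : Finset α → ℕ) (A : Set (Finset α)) {S S' : Finset α}
    (hinj : Function.Injective u) (h1 : bestIn u A S ⊆ S') (h2 : S' ⊆ S) :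
    bestIn u A S' = bestIn u A S := by
  apply bestIn_eq_of u A hinj h1 (bestIn_acc u A S)
  intro T hT hTA
  exact bestIn_le u A (hT.trans h2) hTA

theorem bestIn_idem (u : Finset α → ℕ) (A : Set (Finset α)) (S : Finset α)
    (hinj : Function.Injective u) : bestIn u A (bestIn u A S) = bestIn u A S :=
  bestIn_irc u A hinj (Finset.Subset.refl _) (bestIn_subset u A S)

theorem subst_mem [DecidableEq α] {C : Finset α → Finset α}
    (hC : Substitutable C) {S S' : Finset α} {x : α}
    (hx : x ∈ C S) (hx' : x ∈ S') (hS : S' ⊆ S) : x ∈ C S' := by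
  have := hC S S' x hS hx
  rwa [Finset.insert_eq_self.mpr hx'] at this

theorem insert_cancel [DecidableEq α] {s : Finset α} {a b : α}
    (h : insert a s = insert b s) (ha : a ∉ s) : a = b := by
  have : a ∈ insert b s := h ▸ Finset.mem_insert_self a s
  rcases Finset.mem_insert.mp this with h1 | h1
  · exact h1
  · exact absurd h1 ha

theorem sdiff_singleton_cancel [DecidableEq α] {s : Finset α} {a b : α}
    (h : s \ {a} = s \ {b}) (has : a ∈ s) : a = b := by
  by_contra hne
  have : a ∈ s \ {b} := Finset.mem_sdiff.mpr ⟨has, by simp [hne]⟩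
  rw [← h] at this
  exact (Finset.mem_sdiff.mp this).2 (Finset.mem_singleton_self a)

theorem card_image_eq_of_iff {β γ : Type*} [DecidableEq β] [DecidableEq γ]
    {s : Finset ℕ} (p : ℕ → β) (q : ℕ → γ)
    (h : ∀ i ∈ s, ∀ j ∈ s, (p i = p j ↔ q i = q j)) :
    (s.image p).card = (s.image q).card := by
  apply Finset.card_bij (fun a ha => q (Finset.mem_image.mp ha).choose)
  · intro a ha
    obtain ⟨hi, _⟩ := (Finset.mem_image.mp ha).choose_spec
    exact Finset.mem_image_of_mem q hi
  · intro a₁ h₁ a₂ h₂ heq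
    obtain ⟨hi₁, hp₁⟩ := (Finset.mem_image.mp h₁).choose_spec
    obtain ⟨hi₂, hp₂⟩ := (Finset.mem_image.mp h₂).choose_spec
    rw [← hp₁, ← hp₂]
    exact (h _ hi₁ _ hi₂).mpr heq
  · intro b hb
    obtain ⟨j, hj, hqj⟩ := Finset.mem_image.mp hb
    refine ⟨p j, Finset.mem_image_of_mem p hj, ?_⟩
    obtain ⟨hi₀, hp₀⟩ := (Finset.mem_image.mp (Finset.mem_image_of_mem p hj)).choose_spec
    rw [← hqj]
    exact (h _ hi₀ _ hj).mp hp₀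

end BestInLemmas

theorem insert_right_cancel {α : Type*} [DecidableEq α] {s t : Finset α} {a : α}
    (h : insert a s = insert a t) (ha : a ∉ s) (hb : a ∉ t) : s = t := by
  rw [← Finset.erase_insert ha, ← Finset.erase_insert hb, h]

set_option linter.unusedSectionVars false

section MarketLemmas

variable {F W : Type*} [DecidableEq F] [DecidableEq W] [Fintype W]
variable (M : Market F W) (μ μt : Matching F W)

/- Wrappers for `M.Cf`. -/
theorem Cf_subset (f : F) (S : Finset W) : M.Cf f S ⊆ S := bestIn_subset _ _ _

theorem Cf_acc (f : F) (S : Finset W) :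
    M.uF f ∅ < M.uF f (M.Cf f S) ∨ M.Cf f S = ∅ :=
  bestIn_acc (M.uF f) {T | M.uF f ∅ < M.uF f T} S

theorem Cf_le (f : F) {S T : Finset W} (hT : T ⊆ S)
    (h : M.uF f ∅ < M.uF f T ∨ T = ∅) : M.uF f T ≤ M.uF f (M.Cf f S) :=
  bestIn_le _ _ hT h

theorem Cf_eq_of (f : F) {S x : Finset W} (hx : x ⊆ S)
    (hxA : M.uF f ∅ < M.uF f x ∨ x = ∅)
    (hmax : ∀ T ⊆ S, (M.uF f ∅ < M.uF f T ∨ T = ∅) → M.uF f T ≤ M.uF f x) :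
    M.Cf f S = x :=
  bestIn_eq_of _ _ (M.injF f) hx hxA hmax

theorem Cf_irc (f : F) {S S' : Finset W} (h1 : M.Cf f S ⊆ S') (h2 : S' ⊆ S) :
    M.Cf f S' = M.Cf f S :=
  bestIn_irc _ _ (M.injF f) h1 h2

/- Wrappers for `M.Cw`. -/
theorem Cw_subset (v : W) (S : Finset F) : M.Cw v S ⊆ S := bestIn_subset _ _ _

theorem Cw_acc (v : W) (S : Finset F) :
    M.uW v ∅ < M.uW v (M.Cw v S) ∨ M.Cw v S = ∅ :=
  bestIn_acc (M.uW v) {T | M.uW v ∅ < M.uW v T} S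

theorem Cw_le (v : W) {S T : Finset F} (hT : T ⊆ S)
    (h : M.uW v ∅ < M.uW v T ∨ T = ∅) : M.uW v T ≤ M.uW v (M.Cw v S) :=
  bestIn_le _ _ hT h

theorem Cw_eq_of (v : W) {S x : Finset F} (hx : x ⊆ S)
    (hxA : M.uW v ∅ < M.uW v x ∨ x = ∅)
    (hmax : ∀ T ⊆ S, (M.uW v ∅ < M.uW v T ∨ T = ∅) → M.uW v T ≤ M.uW v x) :
    M.Cw v S = x :=
  bestIn_eq_of _ _ (M.injW v) hx hxA hmax

theorem Cw_irc (v : W) {S S' : Finset F} (h1 : M.Cw v S ⊆ S') (h2 : S' ⊆ S) :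
    M.Cw v S' = M.Cw v S :=
  bestIn_irc _ _ (M.injW v) h1 h2

/- Wrappers for `M.Cfred` and `M.Cwred`. -/
theorem Cfred_subset (f : F) (S : Finset W) : M.Cfred μ μt f S ⊆ S := bestIn_subset _ _ _

theorem Cfred_acc (f : F) (S : Finset W) :
    M.Cfred μ μt f S ∈ M.RAf μ μt f ∨ M.Cfred μ μt f S = ∅ := bestIn_acc _ _ _

theorem Cfred_le (f : F) {S T : Finset W} (hT : T ⊆ S)
    (h : T ∈ M.RAf μ μt f ∨ T = ∅) : M.uF f T ≤ M.uF f (M.Cfred μ μt f S) :=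
  bestIn_le _ _ hT h

theorem Cfred_eq_of (f : F) {S x : Finset W} (hx : x ⊆ S)
    (hxA : x ∈ M.RAf μ μt f ∨ x = ∅)
    (hmax : ∀ T ⊆ S, (T ∈ M.RAf μ μt f ∨ T = ∅) → M.uF f T ≤ M.uF f x) :
    M.Cfred μ μt f S = x :=
  bestIn_eq_of _ _ (M.injF f) hx hxA hmax

theorem Cfred_irc (f : F) {S S' : Finset W} (h1 : M.Cfred μ μt f S ⊆ S')
    (h2 : S' ⊆ S) : M.Cfred μ μt f S' = M.Cfred μ μt f S :=
  bestIn_irc _ _ (M.injF f) h1 h2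

theorem Cfred_idem (f : F) (S : Finset W) :
    M.Cfred μ μt f (M.Cfred μ μt f S) = M.Cfred μ μt f S :=
  bestIn_idem _ _ _ (M.injF f)

theorem Cwred_subset (v : W) (S : Finset F) : M.Cwred μ μt v S ⊆ S := bestIn_subset _ _ _

theorem Cwred_acc (v : W) (S : Finset F) :
    M.Cwred μ μt v S ∈ M.RAw μ μt v ∨ M.Cwred μ μt v S = ∅ := bestIn_acc _ _ _

theorem Cwred_le (v : W) {S T : Finset F} (hT : T ⊆ S)
    (h : T ∈ M.RAw μ μt v ∨ T = ∅) : M.uW v T ≤ M.uW v (M.Cwred μ μt v S) :=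
  bestIn_le _ _ hT h

theorem Cwred_eq_of (v : W) {S x : Finset F} (hx : x ⊆ S)
    (hxA : x ∈ M.RAw μ μt v ∨ x = ∅)
    (hmax : ∀ T ⊆ S, (T ∈ M.RAw μ μt v ∨ T = ∅) → M.uW v T ≤ M.uW v x) :
    M.Cwred μ μt v S = x :=
  bestIn_eq_of _ _ (M.injW v) hx hxA hmax

theorem Cwred_irc (v : W) {S S' : Finset F} (h1 : M.Cwred μ μt v S ⊆ S')
    (h2 : S' ⊆ S) : M.Cwred μ μt v S' = M.Cwred μ μt v S :=
  bestIn_irc _ _ (M.injW v) h1 h2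

theorem Cwred_idem (v : W) (S : Finset F) :
    M.Cwred μ μt v (M.Cwred μ μt v S) = M.Cwred μ μt v S :=
  bestIn_idem _ _ _ (M.injW v)

/-- The reduced choice of a firm is the original choice on the set purged of
deleted workers. -/
theorem Cfred_filter (f : F) (S : Finset W) :
    M.Cfred μ μt f S = M.Cf f (S.filter (fun x => x ∉ M.Dall μ μt f)) := by
  apply Cfred_eq_of
  · exact (Cf_subset M f _).trans (Finset.filter_subset _ _)
  · rcases Cf_acc M f (S.filter (fun x => x ∉ M.Dall μ μt f)) with h | h
    · left
      refine ⟨h, fun y hy => ?_⟩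
      exact (Finset.mem_filter.mp (Cf_subset M f _ hy)).2
    · right; exact h
  · rintro T hTS (⟨hacc, havoid⟩ | rfl)
    · refine Cf_le M f ?_ (Or.inl hacc)
      intro y hy
      exact Finset.mem_filter.mpr ⟨hTS hy, havoid y hy⟩
    · exact Cf_le M f (Finset.empty_subset _) (Or.inr rfl)

theorem Cwred_filter (v : W) (S : Finset F) :
    M.Cwred μ μt v S = M.Cw v (S.filter (fun x => x ∉ M.Eall μ μt v)) := by
  apply Cwred_eq_of
  · exact (Cw_subset M v _).trans (Finset.filter_subset _ _)
  · rcases Cw_acc M v (S.filter (fun x => x ∉ M.Eall μ μt v)) with h | h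
    · left
      refine ⟨h, fun y hy => ?_⟩
      exact (Finset.mem_filter.mp (Cw_subset M v _ hy)).2
    · right; exact h
  · rintro T hTS (⟨hacc, havoid⟩ | rfl)
    · refine Cw_le M v ?_ (Or.inl hacc)
      intro y hy
      exact Finset.mem_filter.mpr ⟨hTS hy, havoid y hy⟩
    · exact Cw_le M v (Finset.empty_subset _) (Or.inr rfl)

theorem Cfred_subst (hsub : M.SubstAll) (f : F) : Substitutable (M.Cfred μ μt f) := by
  intro S S' b hS hb
  rw [Cfred_filter] at hb ⊢
  have hbP : b ∉ M.Dall μ μt f :=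
    (Finset.mem_filter.mp (Cf_subset M f _ hb)).2
  rw [Finset.filter_insert, if_pos hbP]
  exact hsub.1 f _ _ b (Finset.filter_subset_filter _ hS) hb

theorem Cwred_subst (hsub : M.SubstAll) (v : W) : Substitutable (M.Cwred μ μt v) := by
  intro S S' b hS hb
  rw [Cwred_filter] at hb ⊢
  have hbP : b ∉ M.Eall μ μt v :=
    (Finset.mem_filter.mp (Cw_subset M v _ hb)).2
  rw [Finset.filter_insert, if_pos hbP]
  exact hsub.2 v _ _ b (Finset.filter_subset_filter _ hS) hb

theorem Cfred_lad (hlad : M.LADAll) (f : F) : LAD (M.Cfred μ μt f) := by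
  intro S' S hS
  rw [Cfred_filter, Cfred_filter]
  exact hlad.1 f _ _ (Finset.filter_subset_filter _ hS)

theorem Cwred_lad (hlad : M.LADAll) (v : W) : LAD (M.Cwred μ μt v) := by
  intro S' S hS
  rw [Cwred_filter, Cwred_filter]
  exact hlad.2 v _ _ (Finset.filter_subset_filter _ hS)

end MarketLemmas

section StableLemmas

variable {F W : Type*} [DecidableEq F] [DecidableEq W] [Fintype W]
variable {M : Market F W} {μ μt : Matching F W}
variable (hsub : M.SubstAll) (hlad : M.LADAll)
variable (hμ : M.Stable μ) (hμt : M.Stable μt) (hge : M.geF μ μt)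

/-- Acceptability-or-emptiness of matched sets. -/
theorem accμF (hμ : M.Stable μ) (f : F) : M.uF f ∅ < M.uF f (μ.fm f) ∨ μ.fm f = ∅ := by
  have := Cf_acc M f (μ.fm f)
  rwa [hμ.1.1 f] at this

theorem accμW (hμ : M.Stable μ) (v : W) : M.uW v ∅ < M.uW v (μ.wm v) ∨ μ.wm v = ∅ := by
  have := Cw_acc M v (μ.wm v)
  rwa [hμ.1.2 v] at this

/-- Singleton acceptability derived from individual rationality. -/
theorem acc_singleton_W' (hsub : M.SubstAll) (hμ : M.Stable μ) {v : W} {g : F}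
    (hg : g ∈ μ.wm v) : M.uW v ∅ < M.uW v {g} := by
  have h1 : g ∈ M.Cw v {g} := by
    have := hsub.2 v (μ.wm v) ∅ g (Finset.empty_subset _) (by rw [hμ.1.2 v]; exact hg)
    simpa using this
  have h2 : M.Cw v {g} = {g} :=
    Finset.Subset.antisymm (Cw_subset M v _) (Finset.singleton_subset_iff.mpr h1)
  rcases Cw_acc M v {g} with h | h
  · rwa [h2] at h
  · rw [h2] at h; simp at h

theorem acc_singleton_F' (hsub : M.SubstAll) (hμ : M.Stable μ) {f : F} {x : W}
    (hx : x ∈ μ.fm f) : M.uF f ∅ < M.uF f {x} := by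
  have h1 : x ∈ M.Cf f {x} := by
    have := hsub.1 f (μ.fm f) ∅ x (Finset.empty_subset _) (by rw [hμ.1.1 f]; exact hx)
    simpa using this
  have h2 : M.Cf f {x} = {x} :=
    Finset.Subset.antisymm (Cf_subset M f _) (Finset.singleton_subset_iff.mpr h1)
  rcases Cf_acc M f {x} with h | h
  · rwa [h2] at h
  · rw [h2] at h; simp at h

include hsub hlad hμ hμt hge

/-- Decomposition: if `μ ⪰_F μt` then `μt ⪰_W μ`. -/
theorem decompW (v : W) : M.Cw v (μ.wm v ∪ μt.wm v) = μt.wm v := by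
  have hsubLam : M.Cw v (μ.wm v ∪ μt.wm v) ⊆ μt.wm v := by
    intro g hg
    by_contra hgnot
    have hgμ : g ∈ μ.wm v := by
      rcases Finset.mem_union.mp (Cw_subset M v _ hg) with h | h
      · exact h
      · exact absurd h hgnot
    have h1 : v ∉ μt.fm g := fun h => hgnot ((μt.consistent g v).mp h)
    have h2 : v ∈ M.Cf g (insert v (μt.fm g)) := by
      have hv : v ∈ M.Cf g (μ.fm g ∪ μt.fm g) := by
        rw [hge g]; exact (μ.consistent g v).mpr hgμ
      exact hsub.1 g _ (μt.fm g) v Finset.subset_union_right hv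
    have h3 : g ∈ M.Cw v (insert g (μt.wm v)) :=
      hsub.2 v _ (μt.wm v) g Finset.subset_union_right hg
    exact hμt.2 g v ⟨h1, h2, h3⟩
  apply M.injW v
  apply Nat.le_antisymm
  · have := Cw_le M v hsubLam (Cw_acc M v (μ.wm v ∪ μt.wm v))
    rwa [hμt.1.2 v] at this
  · exact Cw_le M v Finset.subset_union_right (accμW hμt v)

/-- A worker matched to `f` under `μ` is not deleted in Step 2(a). -/
theorem not_D2_of_μ {f : F} {x : W} (hx : x ∈ μ.fm f) : x ∉ M.D2 μt f := by
  rintro ⟨W', ⟨hC, _⟩, hxW', hxnot⟩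
  have h1 : M.Cf f (insert x (μt.fm f)) = μt.fm f := by
    have := Cf_irc M f (S := μt.fm f ∪ W') (S' := insert x (μt.fm f))
      (by rw [hC]; exact Finset.subset_insert _ _)
      (Finset.insert_subset (Finset.mem_union_right _ hxW') Finset.subset_union_left)
    rw [this, hC]
  have h2 : x ∈ M.Cf f (insert x (μt.fm f)) := by
    have hv : x ∈ M.Cf f (μ.fm f ∪ μt.fm f) := by rw [hge f]; exact hx
    exact hsub.1 f _ (μt.fm f) x Finset.subset_union_right hv
  rw [h1] at h2
  exact hxnot h2

/-- A firm matched to `v` under `μ` is not deleted in Step 1(b). -/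
theorem not_E1_of_μ {v : W} {g : F} (hg : g ∈ μ.wm v) : g ∉ M.E1 μt v := by
  rintro ⟨F', ⟨hC, _⟩, hgF', hgnot⟩
  have h1 : v ∉ μt.fm g := fun h => hgnot ((μt.consistent g v).mp h)
  have h2 : v ∈ M.Cf g (insert v (μt.fm g)) := by
    have hv : v ∈ M.Cf g (μ.fm g ∪ μt.fm g) := by
      rw [hge g]; exact (μ.consistent g v).mpr hg
    exact hsub.1 g _ (μt.fm g) v Finset.subset_union_right hv
  have h3 : g ∈ M.Cw v (insert g (μt.wm v)) := by
    have hv : g ∈ M.Cw v (F' ∪ μt.wm v) := by rw [hC]; exact hgF'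
    exact hsub.2 v _ (μt.wm v) g Finset.subset_union_right hv
  exact hμt.2 g v ⟨h1, h2, h3⟩

/-- A worker matched to `f` under `μt` is not deleted in Step 1(a). -/
theorem not_D1_of_μt {f : F} {x : W} (hx : x ∈ μt.fm f) : x ∉ M.D1 μ f := by
  rintro ⟨W', ⟨hC, _⟩, hxW', hxnot⟩
  have h2 : x ∈ M.Cf f (insert x (μ.fm f)) := by
    have hv : x ∈ M.Cf f (W' ∪ μ.fm f) := by rw [hC]; exact hxW'
    exact hsub.1 f _ (μ.fm f) x Finset.subset_union_right hv
  have h3 : f ∈ M.Cw x (insert f (μ.wm x)) := by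
    have hv : f ∈ M.Cw x (μ.wm x ∪ μt.wm x) := by
      rw [decompW hsub hlad hμ hμt hge x]; exact (μt.consistent f x).mp hx
    exact hsub.2 x _ (μ.wm x) f Finset.subset_union_left hv
  exact hμ.2 f x ⟨hxnot, h2, h3⟩

/-- A firm matched to `v` under `μt` is not deleted in Step 2(b). -/
theorem not_E2_of_μt {v : W} {g : F} (hg : g ∈ μt.wm v) : g ∉ M.E2 μ v := by
  rintro ⟨F', ⟨hC, _⟩, hgF', hgnot⟩
  have h1 : M.Cw v (insert g (μ.wm v)) = μ.wm v := by
    have := Cw_irc M v (S := μ.wm v ∪ F') (S' := insert g (μ.wm v))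
      (by rw [hC]; exact Finset.subset_insert _ _)
      (Finset.insert_subset (Finset.mem_union_right _ hgF') Finset.subset_union_left)
    rw [this, hC]
  have h2 : g ∈ M.Cw v (insert g (μ.wm v)) := by
    have hv : g ∈ M.Cw v (μ.wm v ∪ μt.wm v) := by
      rw [decompW hsub hlad hμ hμt hge v]; exact hg
    exact hsub.2 v _ (μ.wm v) g Finset.subset_union_left hv
  rw [h1] at h2
  exact hgnot h2

/-- `μ(f)` avoids all deletions (firm side). -/
theorem μ_avoids_D {f : F} {x : W} (hx : x ∈ μ.fm f) : x ∉ M.Dall μ μt f := by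
  rintro ((h | h) | h)
  · obtain ⟨W', _, _, hxnot⟩ := h
    exact hxnot hx
  · exact not_D2_of_μ hsub hlad hμ hμt hge hx h
  · rcases h with hnot | hE
    · exact hnot (acc_singleton_W' hsub hμ ((μ.consistent f x).mp hx))
    · rcases hE with hE1 | hE2
      · exact not_E1_of_μ hsub hlad hμ hμt hge ((μ.consistent f x).mp hx) hE1
      · obtain ⟨F', _, _, hgnot⟩ := hE2
        exact hgnot ((μ.consistent f x).mp hx)

/-- `μ(v)` avoids all deletions (worker side). -/
theorem μ_avoids_E {v : W} {g : F} (hg : g ∈ μ.wm v) : g ∉ M.Eall μ μt v := by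
  rintro ((h | h) | h)
  · exact not_E1_of_μ hsub hlad hμ hμt hge hg h
  · obtain ⟨F', _, _, hgnot⟩ := h
    exact hgnot hg
  · rcases h with hnot | hD
    · exact hnot (acc_singleton_F' hsub hμ ((μ.consistent g v).mpr hg))
    · rcases hD with hD1 | hD2
      · obtain ⟨W', _, _, hxnot⟩ := hD1
        exact hxnot ((μ.consistent g v).mpr hg)
      · exact not_D2_of_μ hsub hlad hμ hμt hge ((μ.consistent g v).mpr hg) hD2

/-- `μt(f)` avoids all deletions (firm side). -/
theorem μt_avoids_D {f : F} {x : W} (hx : x ∈ μt.fm f) : x ∉ M.Dall μ μt f := by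
  rintro ((h | h) | h)
  · exact not_D1_of_μt hsub hlad hμ hμt hge hx h
  · obtain ⟨W', _, _, hxnot⟩ := h
    exact hxnot hx
  · rcases h with hnot | hE
    · exact hnot (acc_singleton_W' hsub hμt ((μt.consistent f x).mp hx))
    · rcases hE with hE1 | hE2
      · obtain ⟨F', _, _, hgnot⟩ := hE1
        exact hgnot ((μt.consistent f x).mp hx)
      · exact not_E2_of_μt hsub hlad hμ hμt hge ((μt.consistent f x).mp hx) hE2

/-- `μt(v)` avoids all deletions (worker side). -/
theorem μt_avoids_E {v : W} {g : F} (hg : g ∈ μt.wm v) : g ∉ M.Eall μ μt v := by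
  rintro ((h | h) | h)
  · obtain ⟨F', _, _, hgnot⟩ := h
    exact hgnot hg
  · exact not_E2_of_μt hsub hlad hμ hμt hge hg h
  · rcases h with hnot | hD
    · exact hnot (acc_singleton_F' hsub hμt ((μt.consistent g v).mpr hg))
    · rcases hD with hD1 | hD2
      · exact not_D1_of_μt hsub hlad hμ hμt hge ((μt.consistent g v).mpr hg) hD1
      · obtain ⟨W', _, _, hxnot⟩ := hD2
        exact hxnot ((μt.consistent g v).mpr hg)

/-- Reduced individual rationality of `μ` (firm side). -/
theorem CfredIRμ (f : F) : M.Cfred μ μt f (μ.fm f) = μ.fm f := by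
  apply Cfred_eq_of M μ μt f (Finset.Subset.refl _)
  · rcases accμF hμ f with h | h
    · exact Or.inl ⟨h, fun y hy => μ_avoids_D hsub hlad hμ hμt hge hy⟩
    · exact Or.inr h
  · rintro T hT (⟨hacc, _⟩ | rfl)
    · have := Cf_le M f hT (Or.inl hacc)
      rwa [hμ.1.1 f] at this
    · have := Cf_le M f (Finset.empty_subset (μ.fm f)) (Or.inr rfl)
      rwa [hμ.1.1 f] at this

theorem CwredIRμ (v : W) : M.Cwred μ μt v (μ.wm v) = μ.wm v := by
  apply Cwred_eq_of M μ μt v (Finset.Subset.refl _)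
  · rcases accμW hμ v with h | h
    · exact Or.inl ⟨h, fun y hy => μ_avoids_E hsub hlad hμ hμt hge hy⟩
    · exact Or.inr h
  · rintro T hT (⟨hacc, _⟩ | rfl)
    · have := Cw_le M v hT (Or.inl hacc)
      rwa [hμ.1.2 v] at this
    · have := Cw_le M v (Finset.empty_subset (μ.wm v)) (Or.inr rfl)
      rwa [hμ.1.2 v] at this

theorem CfredIRμt (f : F) : M.Cfred μ μt f (μt.fm f) = μt.fm f := by
  apply Cfred_eq_of M μ μt f (Finset.Subset.refl _)
  · rcases accμF hμt f with h | h
    · exact Or.inl ⟨h, fun y hy => μt_avoids_D hsub hlad hμ hμt hge hy⟩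
    · exact Or.inr h
  · rintro T hT (⟨hacc, _⟩ | rfl)
    · have := Cf_le M f hT (Or.inl hacc)
      rwa [hμt.1.1 f] at this
    · have := Cf_le M f (Finset.empty_subset (μt.fm f)) (Or.inr rfl)
      rwa [hμt.1.1 f] at this

/-- Under the reduced profile, the choice of a firm out of everything is `μ(f)`. -/
theorem CfredUniv (f : F) : M.Cfred μ μt f Finset.univ = μ.fm f := by
  set T' := M.Cfred μ μt f Finset.univ with hT'
  have hT'avoid : ∀ x ∈ T', x ∉ M.Dall μ μt f := by
    rcases Cfred_acc M μ μt f Finset.univ with h | h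
    · exact fun x hx => h.2 x hx
    · intro x hx
      rw [hT', h] at hx
      simp at hx
  have hT'acc : M.uF f ∅ < M.uF f T' ∨ T' = ∅ := by
    rcases Cfred_acc M μ μt f Finset.univ with h | h
    · exact Or.inl h.1
    · exact Or.inr h
  have hYm : M.Cf f (T' ∪ μ.fm f) = μ.fm f := by
    set Y := M.Cf f (T' ∪ μ.fm f) with hY
    by_cases hYsub : Y ⊆ μ.fm f
    · apply M.injF f
      apply Nat.le_antisymm
      · have := Cf_le M f hYsub (Cf_acc M f (T' ∪ μ.fm f))
        rwa [hμ.1.1 f] at this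
      · exact Cf_le M f Finset.subset_union_right (accμF hμ f)
    · exfalso
      obtain ⟨y, hyY, hym⟩ := Finset.not_subset.mp hYsub
      have hyD : y ∈ M.D1 μ f := by
        refine ⟨Y, ⟨?_, ?_⟩, hyY, hym⟩
        · exact Cf_irc M f (by rw [← hY]; exact Finset.subset_union_left)
            (Finset.union_subset (Cf_subset M f _) Finset.subset_union_right)
        · exact fun h => hym (h ▸ hyY)
      have hyDall : y ∈ M.Dall μ μt f := Or.inl (Or.inl hyD)
      rcases Finset.mem_union.mp (Cf_subset M f _ hyY) with h | h
      · exact hT'avoid y h hyDall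
      · exact μ_avoids_D hsub hlad hμ hμt hge h hyDall
  apply M.injF f
  apply Nat.le_antisymm
  · have h1 : M.uF f T' ≤ M.uF f (M.Cf f (T' ∪ μ.fm f)) :=
      Cf_le M f Finset.subset_union_left hT'acc
    rwa [hYm] at h1
  · refine Cfred_le M μ μt f (Finset.subset_univ _) ?_
    rcases accμF hμ f with h | h
    · exact Or.inl ⟨h, fun y hy => μ_avoids_D hsub hlad hμ hμt hge hy⟩
    · exact Or.inr h

end StableLemmas

section Rural

variable {F W : Type*} [DecidableEq F] [DecidableEq W] [Fintype W]
variable {M : Market F W} {μ μt : Matching F W}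
variable (hsub : M.SubstAll) (hlad : M.LADAll)
variable (hμ : M.Stable μ) (hμt : M.Stable μt) (hge : M.geF μ μt)

include hsub hlad hμ hμt hge

/-- Rural hospitals: comparable stable matchings match each firm with the same
number of workers. -/
theorem rural (g : F) : (μt.fm g).card = (μ.fm g).card := by
  classical
  have hFle : ∀ g' : F, (μt.fm g').card ≤ (μ.fm g').card := by
    intro g'
    have := hlad.1 g' (μt.fm g') (μ.fm g' ∪ μt.fm g') Finset.subset_union_right
    rwa [hμt.1.1 g', hge g'] at this
  have hWle : ∀ v : W, (μ.wm v).card ≤ (μt.wm v).card := by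
    intro v
    have := hlad.2 v (μ.wm v) (μ.wm v ∪ μt.wm v) Finset.subset_union_left
    rwa [hμ.1.2 v, decompW hsub hlad hμ hμt hge v] at this
  set G0 : Finset F := Finset.univ.biUnion (fun v : W => μ.wm v ∪ μt.wm v) with hG0
  have hcount : ∀ ν : Matching F W, (∀ v, ν.wm v ⊆ G0) →
      ∑ g' ∈ G0, (ν.fm g').card = ∑ v : W, (ν.wm v).card := by
    intro ν hsub0
    have h1 : ∀ g' : F, (ν.fm g').card = ∑ v : W, (if v ∈ ν.fm g' then 1 else 0) := by
      intro g'
      simp [Finset.sum_ite_mem, Finset.univ_inter]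
    have h2 : ∀ v : W, (∑ g' ∈ G0, if g' ∈ ν.wm v then 1 else 0) = (ν.wm v).card := by
      intro v
      rw [Finset.sum_ite_mem, Finset.inter_eq_right.mpr (hsub0 v)]
      simp
    calc ∑ g' ∈ G0, (ν.fm g').card
        = ∑ g' ∈ G0, ∑ v : W, (if v ∈ ν.fm g' then 1 else 0) := by
          exact Finset.sum_congr rfl (fun g' _ => h1 g')
      _ = ∑ v : W, ∑ g' ∈ G0, (if v ∈ ν.fm g' then 1 else 0) := Finset.sum_comm
      _ = ∑ v : W, ∑ g' ∈ G0, (if g' ∈ ν.wm v then 1 else 0) := by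
          refine Finset.sum_congr rfl (fun v _ => Finset.sum_congr rfl (fun g' _ => ?_))
          simp only [ν.consistent g' v]
      _ = ∑ v : W, (ν.wm v).card := Finset.sum_congr rfl (fun v _ => h2 v)
  have hμsub : ∀ v, μ.wm v ⊆ G0 := by
    intro v g' hg'
    exact Finset.mem_biUnion.mpr ⟨v, Finset.mem_univ v, Finset.mem_union_left _ hg'⟩
  have hμtsub : ∀ v, μt.wm v ⊆ G0 := by
    intro v g' hg'
    exact Finset.mem_biUnion.mpr ⟨v, Finset.mem_univ v, Finset.mem_union_right _ hg'⟩
  have hs : ∑ g' ∈ G0, (μ.fm g').card ≤ ∑ g' ∈ G0, (μt.fm g').card := by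
    rw [hcount μ hμsub, hcount μt hμtsub]
    exact Finset.sum_le_sum (fun v _ => hWle v)
  by_cases hg : g ∈ G0
  · by_contra hne
    have hlt : (μt.fm g).card < (μ.fm g).card := lt_of_le_of_ne (hFle g) hne
    have : ∑ g' ∈ G0, (μt.fm g').card < ∑ g' ∈ G0, (μ.fm g').card :=
      Finset.sum_lt_sum (fun i _ => hFle i) ⟨g, hg, hlt⟩
    omega
  · have h0 : μ.fm g = ∅ := by
      rw [Finset.eq_empty_iff_forall_notMem]
      intro v hv
      exact hg (hμsub v ((μ.consistent g v).mp hv))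
    have h0t : μt.fm g = ∅ := by
      rw [Finset.eq_empty_iff_forall_notMem]
      intro v hv
      exact hg (hμtsub v ((μt.consistent g v).mp hv))
    rw [h0, h0t]

end Rural

section Cycle

variable {F W : Type*} [DecidableEq F] [DecidableEq W] [Fintype W]
variable {M : Market F W} {μ μt : Matching F W}
variable (hsub : M.SubstAll) (hlad : M.LADAll)
variable (hμ : M.Stable μ) (hμt : M.Stable μt) (hge : M.geF μ μt)
variable {r : ℕ} {w : ℕ → W} {f : ℕ → F} (hcyc : M.IsCycle μ μt r w f)

include hsub hlad hμ hμt hge hcyc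

/-- In a cycle, the incoming worker of a firm is never already matched to it:
`w (i+1) ∉ μ(f i)`. -/
theorem cnew (i : ℕ) : w (i + 1) ∉ μ.fm (f i) := by
  obtain ⟨hcr, hcw, hcf, hc⟩ := hcyc
  intro hmem
  have hfweq : f (i + 1) = f i := by
    by_contra hne
    have hun : μ.wm (w (i + 1)) ∪ {f i} = μ.wm (w (i + 1)) :=
      Finset.union_eq_left.mpr
        (Finset.singleton_subset_iff.mpr ((μ.consistent (f i) (w (i + 1))).mp hmem))
    have h2 := (hc i).2.2
    rw [hun, CwredIRμ hsub hlad hμ hμt hge (w (i + 1))] at h2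
    have h3 : f (i + 1) ∈ μ.wm (w (i + 1)) := (μ.consistent _ _).mp (hc (i + 1)).1.1
    rw [h2] at h3
    rcases Finset.mem_insert.mp h3 with h | h
    · exact hne h
    · exact (Finset.mem_sdiff.mp h).2 (Finset.mem_singleton_self _)
  have hwne : w (i + 1) ≠ w i := by
    intro heq
    have h1 : w (i + 1) ∈ insert (w (i + 1)) (μ.fm (f i) \ {w i}) :=
      Finset.mem_insert_self _ _
    rw [← (hc i).2.1] at h1
    have h2 := Cfred_subset M μ μt (f i) _ h1
    rw [heq] at h2
    exact (Finset.mem_sdiff.mp h2).2 (Finset.mem_singleton_self _)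
  have hins : insert (w (i + 1)) (μ.fm (f i) \ {w i}) = μ.fm (f i) \ {w i} :=
    Finset.insert_eq_self.mpr (Finset.mem_sdiff.mpr ⟨hmem, by simp [hwne]⟩)
  have hcard1 : (M.Cfred μ μt (f i) (Finset.univ \ {w i})).card = (μ.fm (f i)).card - 1 := by
    rw [(hc i).2.1, hins, Finset.card_sdiff_of_subset (Finset.singleton_subset_iff.mpr (hc i).1.1),
      Finset.card_singleton]
  have hsubt : μt.fm (f i) ⊆ Finset.univ \ {w i} := by
    intro x hx
    refine Finset.mem_sdiff.mpr ⟨Finset.mem_univ x, ?_⟩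
    simp only [Finset.mem_singleton]
    rintro rfl
    exact (hc i).1.2 hx
  have hle := Cfred_lad M μ μt hlad (f i) (μt.fm (f i)) (Finset.univ \ {w i}) hsubt
  rw [CfredIRμt hsub hlad hμ hμt hge (f i), hcard1,
    rural hsub hlad hμ hμt hge (f i)] at hle
  have hpos : 0 < (μ.fm (f i)).card := Finset.card_pos.mpr ⟨w i, (hc i).1.1⟩
  omega

/-- Same firm, same leaving worker: same entering worker. -/
theorem prop_fstep (i j : ℕ) (hww : w i = w j) (hff : f i = f j) :
    w (i + 1) = w (j + 1) := by
  have h2j := (hcyc.2.2.2 j).2.1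
  rw [← hww, ← hff] at h2j
  have h := ((hcyc.2.2.2 i).2.1).symm.trans h2j
  refine insert_cancel h ?_
  intro hx
  exact cnew hsub hlad hμ hμt hge hcyc i (Finset.mem_sdiff.mp hx).1

/-- Same entering worker, same firm: same next firm. -/
theorem prop_wstep (i j : ℕ) (hww : w (i + 1) = w (j + 1)) (hff : f i = f j) :
    f (i + 1) = f (j + 1) := by
  have h3j := (hcyc.2.2.2 j).2.2
  rw [← hww, ← hff] at h3j
  have heq := ((hcyc.2.2.2 i).2.2).symm.trans h3j
  have hgX : f i ∉ μ.wm (w (i + 1)) := fun hx =>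
    cnew hsub hlad hμ hμt hge hcyc i ((μ.consistent _ _).mpr hx)
  have hsd : μ.wm (w (i + 1)) \ {f (i + 1)} = μ.wm (w (i + 1)) \ {f (j + 1)} :=
    insert_right_cancel heq (fun hx => hgX (Finset.mem_sdiff.mp hx).1)
      (fun hx => hgX (Finset.mem_sdiff.mp hx).1)
  refine sdiff_singleton_cancel hsd ?_
  exact (μ.consistent _ _).mp (hcyc.2.2.2 (i + 1)).1.1

theorem prop_iter (i j : ℕ) (hww : w (i + 1) = w (j + 1)) (hff : f (i + 1) = f (j + 1)) :
    ∀ k, w (i + 1 + k) = w (j + 1 + k) ∧ f (i + 1 + k) = f (j + 1 + k) := by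
  intro k
  induction k with
  | zero => exact ⟨hww, hff⟩
  | succ k ih =>
    have hw' := prop_fstep hsub hlad hμ hμt hge hcyc (i + 1 + k) (j + 1 + k) ih.1 ih.2
    have hf' := prop_wstep hsub hlad hμ hμt hge hcyc (i + 1 + k) (j + 1 + k) hw' ih.2
    exact ⟨hw', hf'⟩

theorem prop_back (i j : ℕ) (hww : w (i + 1) = w (j + 1)) (hff : f (i + 1) = f (j + 1)) :
    w i = w j ∧ f i = f j := by
  have hcr : 0 < r := hcyc.1
  obtain ⟨h1, h2⟩ := prop_iter hsub hlad hμ hμt hge hcyc i j hww hff (r - 1)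
  have e1 : i + 1 + (r - 1) = i + r := by omega
  have e2 : j + 1 + (r - 1) = j + r := by omega
  rw [e1, e2, hcyc.2.1 i, hcyc.2.1 j] at h1
  rw [e1, e2, hcyc.2.2.1 i, hcyc.2.2.1 j] at h2
  exact ⟨h1, h2⟩

end Cycle

section MainLemmas

variable {F W : Type*} [DecidableEq F] [DecidableEq W] [Fintype W]
variable {M : Market F W} {μ μt : Matching F W}
variable (hsub : M.SubstAll) (hlad : M.LADAll)
variable (hμ : M.Stable μ) (hμt : M.Stable μt) (hge : M.geF μ μt)
variable {r : ℕ} {w : ℕ → W} {f : ℕ → F} (hcyc : M.IsCycle μ μt r w f)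

include hsub hlad hμ hμt hge hcyc

/-- The key firm-side computation: removing all leaving workers of a cycle firm
yields exactly the cyclic assignment. -/
theorem firm_main (g : F)
    (hI : ((Finset.range r).filter (fun i => f i = g)).Nonempty) :
    M.Cfred μ μt g
        (Finset.univ \ ((Finset.range r).filter (fun i => f i = g)).image w) =
      (μ.fm g \ ((Finset.range r).filter (fun i => f i = g)).image w) ∪
        ((Finset.range r).filter (fun i => f i = g)).image (fun i => w (i + 1)) := by
  set I := (Finset.range r).filter (fun i => f i = g) with hIdef
  set A := I.image w with hAdef
  set B := I.image (fun i => w (i + 1)) with hBdef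
  set m := μ.fm g with hmdef
  have hfi : ∀ i ∈ I, f i = g := fun i hi => (Finset.mem_filter.mp hi).2
  have hc2g : ∀ i ∈ I, M.Cfred μ μt g (Finset.univ \ {w i}) =
      insert (w (i + 1)) (m \ {w i}) := by
    intro i hi
    have := (hcyc.2.2.2 i).2.1
    rwa [hfi i hi] at this
  have hAm : A ⊆ m := by
    intro a ha
    obtain ⟨i, hi, rfl⟩ := Finset.mem_image.mp ha
    have := (hcyc.2.2.2 i).1.1
    rwa [hfi i hi] at this
  have hBnotm : ∀ b ∈ B, b ∉ m := by
    intro b hb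
    obtain ⟨i, hi, rfl⟩ := Finset.mem_image.mp hb
    have := cnew hsub hlad hμ hμt hge hcyc i
    rwa [hfi i hi] at this
  have hcard : A.card = B.card := by
    apply card_image_eq_of_iff
    intro i hi j hj
    have hffij : f i = f j := (hfi i hi).trans (hfi j hj).symm
    constructor
    · intro h
      exact prop_fstep hsub hlad hμ hμt hge hcyc i j h hffij
    · intro h
      exact (prop_back hsub hlad hμ hμt hge hcyc i j h
        (prop_wstep hsub hlad hμ hμt hge hcyc i j h hffij)).1
  have hlower : (m \ A) ∪ B ⊆ M.Cfred μ μt g (Finset.univ \ A) := by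
    intro x hx
    rcases Finset.mem_union.mp hx with hx1 | hx1
    · obtain ⟨i0, hi0⟩ := hI
      have hwA : w i0 ∈ A := Finset.mem_image_of_mem w hi0
      have hx2 : x ∈ M.Cfred μ μt g (Finset.univ \ {w i0}) := by
        rw [hc2g i0 hi0]
        refine Finset.mem_insert_of_mem (Finset.mem_sdiff.mpr
          ⟨(Finset.mem_sdiff.mp hx1).1, ?_⟩)
        simp only [Finset.mem_singleton]
        rintro rfl
        exact (Finset.mem_sdiff.mp hx1).2 hwA
      refine subst_mem (Cfred_subst M μ μt hsub g) hx2 ?_ ?_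
      · exact Finset.mem_sdiff.mpr ⟨Finset.mem_univ x, (Finset.mem_sdiff.mp hx1).2⟩
      · intro y hy
        refine Finset.mem_sdiff.mpr ⟨Finset.mem_univ y, ?_⟩
        simp only [Finset.mem_singleton]
        rintro rfl
        exact (Finset.mem_sdiff.mp hy).2 hwA
    · obtain ⟨i, hi, rfl⟩ := Finset.mem_image.mp hx1
      have hxnotA : w (i + 1) ∉ A := by
        intro h
        exact hBnotm _ hx1 (hAm h)
      have hx2 : w (i + 1) ∈ M.Cfred μ μt g (Finset.univ \ {w i}) := by
        rw [hc2g i hi]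
        exact Finset.mem_insert_self _ _
      refine subst_mem (Cfred_subst M μ μt hsub g) hx2 ?_ ?_
      · exact Finset.mem_sdiff.mpr ⟨Finset.mem_univ _, hxnotA⟩
      · intro y hy
        refine Finset.mem_sdiff.mpr ⟨Finset.mem_univ y, ?_⟩
        simp only [Finset.mem_singleton]
        rintro rfl
        exact (Finset.mem_sdiff.mp hy).2 (Finset.mem_image_of_mem w hi)
  have hupper : (M.Cfred μ μt g (Finset.univ \ A)).card ≤ m.card := by
    have := Cfred_lad M μ μt hlad g (Finset.univ \ A) Finset.univ (Finset.sdiff_subset)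
    rwa [CfredUniv hsub hlad hμ hμt hge g] at this
  have htarget : ((m \ A) ∪ B).card = m.card := by
    have hdisj : Disjoint (m \ A) B := by
      rw [Finset.disjoint_right]
      intro b hb hb2
      exact hBnotm b hb (Finset.mem_sdiff.mp hb2).1
    rw [Finset.card_union_of_disjoint hdisj, Finset.card_sdiff_of_subset hAm, ← hcard]
    have := Finset.card_le_card hAm
    omega
  exact (Finset.eq_of_subset_of_card_le hlower (by rw [htarget]; exact hupper)).symm

/-- The key worker-side computation. -/
theorem worker_main (v : W) :
    M.Cwred μ μt v
        (μ.wm v ∪ ((Finset.range r).filter (fun i => w (i + 1) = v)).image f) =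
      (μ.wm v \ ((Finset.range r).filter (fun i => w (i + 1) = v)).image
          (fun i => f (i + 1))) ∪
        ((Finset.range r).filter (fun i => w (i + 1) = v)).image f := by
  set J := (Finset.range r).filter (fun i => w (i + 1) = v) with hJdef
  set G := J.image (fun i => f (i + 1)) with hGdef
  set H := J.image f with hHdef
  have hwi : ∀ i ∈ J, w (i + 1) = v := fun i hi => (Finset.mem_filter.mp hi).2
  have hc3v : ∀ i ∈ J, M.Cwred μ μt v (μ.wm v ∪ {f i}) =
      insert (f i) (μ.wm v \ {f (i + 1)}) := by
    intro i hi
    have := (hcyc.2.2.2 i).2.2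
    rwa [hwi i hi] at this
  have hHnot : ∀ x ∈ H, x ∉ μ.wm v := by
    intro x hx
    obtain ⟨i, hi, rfl⟩ := Finset.mem_image.mp hx
    intro hmem
    have : w (i + 1) ∈ μ.fm (f i) := (μ.consistent _ _).mpr (by rwa [hwi i hi])
    exact cnew hsub hlad hμ hμt hge hcyc i this
  have hGsub : G ⊆ μ.wm v := by
    intro x hx
    obtain ⟨i, hi, rfl⟩ := Finset.mem_image.mp hx
    have h1 : w (i + 1) ∈ μ.fm (f (i + 1)) := (hcyc.2.2.2 (i + 1)).1.1
    have := (μ.consistent _ _).mp h1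
    rwa [hwi i hi] at this
  have hcard : G.card = H.card := by
    apply card_image_eq_of_iff
    intro i hi j hj
    have hwwij : w (i + 1) = w (j + 1) := (hwi i hi).trans (hwi j hj).symm
    constructor
    · intro h
      exact (prop_back hsub hlad hμ hμt hge hcyc i j hwwij h).2
    · intro h
      exact prop_wstep hsub hlad hμ hμt hge hcyc i j hwwij h
  set T := M.Cwred μ μt v (μ.wm v ∪ H) with hTdef
  have hupper : T ⊆ (μ.wm v \ G) ∪ H := by
    intro x hx
    have hxU : x ∈ μ.wm v ∪ H := Cwred_subset M μ μt v _ hx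
    by_cases hxH : x ∈ H
    · exact Finset.mem_union_right _ hxH
    · have hxw : x ∈ μ.wm v := by
        rcases Finset.mem_union.mp hxU with h | h
        · exact h
        · exact absurd h hxH
      refine Finset.mem_union_left _ (Finset.mem_sdiff.mpr ⟨hxw, ?_⟩)
      intro hxG
      obtain ⟨i, hi, hfi⟩ := Finset.mem_image.mp hxG
      have hfiH : f i ∈ H := Finset.mem_image_of_mem f hi
      have hx2 : x ∈ M.Cwred μ μt v (μ.wm v ∪ {f i}) := by
        refine subst_mem (Cwred_subst M μ μt hsub v) hx ?_ ?_
        · exact Finset.mem_union_left _ hxw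
        · exact Finset.union_subset_union_right (Finset.singleton_subset_iff.mpr hfiH)
      rw [hc3v i hi] at hx2
      rcases Finset.mem_insert.mp hx2 with h | h
      · exact hxH (h ▸ hfiH)
      · rw [← hfi] at h
        exact (Finset.mem_sdiff.mp h).2 (Finset.mem_singleton_self _)
  have hlow : (μ.wm v).card ≤ T.card := by
    have := Cwred_lad M μ μt hlad v (μ.wm v) (μ.wm v ∪ H) Finset.subset_union_left
    rwa [CwredIRμ hsub hlad hμ hμt hge v] at this
  have htarget : ((μ.wm v \ G) ∪ H).card = (μ.wm v).card := by
    have hdisj : Disjoint (μ.wm v \ G) H := by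
      rw [Finset.disjoint_right]
      intro b hb hb2
      exact hHnot b hb (Finset.mem_sdiff.mp hb2).1
    rw [Finset.card_union_of_disjoint hdisj, Finset.card_sdiff_of_subset hGsub, hcard]
    have := Finset.card_le_card hGsub
    omega
  exact Finset.eq_of_subset_of_card_le hupper (by rw [htarget]; exact hlow)

end MainLemmas

section Assembly

variable {F W : Type*} [DecidableEq F] [DecidableEq W] [Fintype W]

/-- The worker-side description of the cyclic matching. -/
theorem nu_wm {r : ℕ} {w : ℕ → W} {f : ℕ → F} (hcr : 0 < r)
    (hpw : ∀ i, w (i + r) = w i) (hpf : ∀ i, f (i + r) = f i)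
    (μ ν : Matching F W) (hν : ∀ g, ν.fm g = Market.cyclicFm μ r w f g) (v : W) :
    ν.wm v = (μ.wm v \ ((Finset.range r).filter (fun i => w (i + 1) = v)).image
        (fun i => f (i + 1))) ∪
      ((Finset.range r).filter (fun i => w (i + 1) = v)).image f := by
  set J := (Finset.range r).filter (fun i => w (i + 1) = v) with hJdef
  set G := J.image (fun i => f (i + 1)) with hGdef
  set H := J.image f with hHdef
  have hwr : w r = w 0 := by have := hpw 0; rwa [Nat.zero_add] at this
  have hfr : f r = f 0 := by have := hpf 0; rwa [Nat.zero_add] at this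
  ext g
  have hbase : g ∈ ν.wm v ↔ v ∈ Market.cyclicFm μ r w f g := by
    rw [← hν g]
    exact (ν.consistent g v).symm
  rw [hbase]
  unfold Market.cyclicFm
  by_cases hex : ∃ i ∈ Finset.range r, f i = g
  · rw [if_pos hex]
    set I := (Finset.range r).filter (fun i => f i = g) with hIdef
    have pieceB : v ∈ I.image (fun i => w (i + 1)) ↔ g ∈ H := by
      constructor
      · intro h
        obtain ⟨i, hi, hwiv⟩ := Finset.mem_image.mp h
        obtain ⟨hir, hfig⟩ := Finset.mem_filter.mp hi
        exact Finset.mem_image.mpr ⟨i, Finset.mem_filter.mpr ⟨hir, hwiv⟩, hfig⟩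
      · intro h
        obtain ⟨i, hi, hfig⟩ := Finset.mem_image.mp h
        obtain ⟨hir, hwiv⟩ := Finset.mem_filter.mp hi
        exact Finset.mem_image.mpr ⟨i, Finset.mem_filter.mpr ⟨hir, hfig⟩, hwiv⟩
    have pieceA : v ∈ I.image w ↔ g ∈ G := by
      constructor
      · intro h
        obtain ⟨i, hi, hwiv⟩ := Finset.mem_image.mp h
        obtain ⟨hir, hfig⟩ := Finset.mem_filter.mp hi
        have hir' : i < r := Finset.mem_range.mp hir
        rcases Nat.eq_zero_or_pos i with rfl | hipos
        · refine Finset.mem_image.mpr ⟨r - 1, Finset.mem_filter.mpr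
            ⟨Finset.mem_range.mpr (by omega), ?_⟩, ?_⟩
          · rw [(by omega : r - 1 + 1 = r), hwr]; exact hwiv
          · rw [(by omega : r - 1 + 1 = r), hfr]; exact hfig
        · refine Finset.mem_image.mpr ⟨i - 1, Finset.mem_filter.mpr
            ⟨Finset.mem_range.mpr (by omega), ?_⟩, ?_⟩
          · rw [(by omega : i - 1 + 1 = i)]; exact hwiv
          · rw [(by omega : i - 1 + 1 = i)]; exact hfig
      · intro h
        obtain ⟨i, hi, hfig⟩ := Finset.mem_image.mp h
        obtain ⟨hir, hwiv⟩ := Finset.mem_filter.mp hi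
        have hir' : i < r := Finset.mem_range.mp hir
        by_cases hlt : i + 1 < r
        · exact Finset.mem_image.mpr ⟨i + 1, Finset.mem_filter.mpr
            ⟨Finset.mem_range.mpr hlt, hfig⟩, hwiv⟩
        · have heq : i + 1 = r := by omega
          refine Finset.mem_image.mpr ⟨0, Finset.mem_filter.mpr
            ⟨Finset.mem_range.mpr hcr, ?_⟩, ?_⟩
          · rw [← hfr, ← heq]; exact hfig
          · rw [← hwr, ← heq]; exact hwiv
    constructor
    · intro h
      rcases Finset.mem_union.mp h with h1 | h1
      · refine Finset.mem_union_left _ (Finset.mem_sdiff.mpr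
          ⟨(μ.consistent g v).mp (Finset.mem_sdiff.mp h1).1, ?_⟩)
        exact fun hg => (Finset.mem_sdiff.mp h1).2 (pieceA.mpr hg)
      · exact Finset.mem_union_right _ (pieceB.mp h1)
    · intro h
      rcases Finset.mem_union.mp h with h1 | h1
      · refine Finset.mem_union_left _ (Finset.mem_sdiff.mpr
          ⟨(μ.consistent g v).mpr (Finset.mem_sdiff.mp h1).1, ?_⟩)
        exact fun ha => (Finset.mem_sdiff.mp h1).2 (pieceA.mp ha)
      · exact Finset.mem_union_right _ (pieceB.mpr h1)
  · rw [if_neg hex]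
    have hgH : g ∉ H := by
      intro h
      obtain ⟨i, hi, hfig⟩ := Finset.mem_image.mp h
      exact hex ⟨i, (Finset.mem_filter.mp hi).1, hfig⟩
    have hgG : g ∉ G := by
      intro h
      obtain ⟨i, hi, hfig⟩ := Finset.mem_image.mp h
      have hir : i < r := Finset.mem_range.mp (Finset.mem_filter.mp hi).1
      by_cases hlt : i + 1 < r
      · exact hex ⟨i + 1, Finset.mem_range.mpr hlt, hfig⟩
      · have heq : i + 1 = r := by omega
        refine hex ⟨0, Finset.mem_range.mpr hcr, ?_⟩
        rw [← hfr, ← heq]; exact hfig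
    constructor
    · intro h
      exact Finset.mem_union_left _
        (Finset.mem_sdiff.mpr ⟨(μ.consistent g v).mp h, hgG⟩)
    · intro h
      rcases Finset.mem_union.mp h with h1 | h1
      · exact (μ.consistent g v).mpr (Finset.mem_sdiff.mp h1).1
      · exact absurd h1 hgH

end Assembly

/-- With substitutable preferences satisfying the law of aggregate
demand, stable matchings `μ ≻_F μ̃`, and a cycle `σ` for the reduced profile `P^{μ,μ̃}`,
the cyclic matching `μ_σ` under `P^{μ,μ̃}` is individually rational under `P^{μ,μ̃}`,
i.e. `C^{μ,μ̃}_a(μ_σ(a)) = μ_σ(a)` for every agent `a`. -/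
theorem cyclic_matching_ir {F W : Type*} [DecidableEq F] [DecidableEq W] [Fintype W]
    (M : Market F W) (hsub : M.SubstAll) (hlad : M.LADAll)
    (μ μt : Matching F W) (hμ : M.Stable μ) (hμt : M.Stable μt) (hgt : M.gtF μ μt)
    (r : ℕ) (w : ℕ → W) (f : ℕ → F) (hcyc : M.IsCycle μ μt r w f)
    (ν : Matching F W) (hν : ∀ g, ν.fm g = Market.cyclicFm μ r w f g) :
    M.IRred μ μt ν := by
  have hge : M.geF μ μt := hgt.1
  constructor
  · intro g
    rw [hν g]
    unfold Market.cyclicFm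
    by_cases hex : ∃ i ∈ Finset.range r, f i = g
    · rw [if_pos hex]
      have hI : ((Finset.range r).filter (fun i => f i = g)).Nonempty := by
        obtain ⟨i, hi, hfi⟩ := hex
        exact ⟨i, Finset.mem_filter.mpr ⟨hi, hfi⟩⟩
      rw [← firm_main hsub hlad hμ hμt hge hcyc g hI]
      exact Cfred_idem M μ μt g _
    · rw [if_neg hex]
      exact CfredIRμ hsub hlad hμ hμt hge g
  · intro v
    rw [nu_wm hcyc.1 hcyc.2.1 hcyc.2.2.1 μ ν hν v,
      ← worker_main hsub hlad hμ hμt hge hcyc v]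
    exact Cwred_idem M μ μt v _
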